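/- If a strongly regular graph has parameters (4t+1, 2t, t−1, t), then adding a universal vertex and performing a local complementation at any non-universal vertex yields a (2t+1)-regular graph on 4t+2 vertices. -/

import Mathlib

/-- Local complementation at a vertex `v`: toggle each edge between distinct
neighbours of `v`, keeping all other adjacencies unchanged. -/
def localComp {V : Type*} (G : SimpleGraph V) (v : V) : SimpleGraph V where
  Adj a b := Xor' (G.Adj a b) (a ≠ b ∧ G.Adj v a ∧ G.Adj v b)
  symm := by
    constructor
    intro a b h
    rcases h with ⟨h1, h2⟩ | ⟨h1, h2⟩
    · exact Or.inl ⟨h1.symm, fun ⟨hne, ha, hb⟩ => h2 ⟨hne.symm, hb, ha⟩⟩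
    · exact Or.inr ⟨⟨h1.1.symm, h1.2.2, h1.2.1⟩, fun hg => h2 hg.symm⟩
  loopless := by
    constructor
    intro a h
    rcases h with ⟨h1, _⟩ | ⟨⟨h1, _⟩, _⟩
    · exact G.loopless.irrefl a h1
    · exact h1 rfl


/-- Add a universal vertex (the `none` vertex) joined to every vertex of `G`. -/
def addUniversal {V : Type*} (G : SimpleGraph V) : SimpleGraph (Option V) where
  Adj a b := match a, b with
    | some u, some w => G.Adj u w
    | some _, none => True
    | none, some _ => True
    | none, none => False
  symm := by
    constructor
    rintro (_ | u) (_ | w) h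
    · exact h
    · trivial
    · trivial
    · exact G.adj_symm h
  loopless := by
    constructor
    rintro (_ | u) h
    · exact h
    · exact G.loopless.irrefl u h

open Finset

theorem card_filter_option' {α} [Fintype α] (p : Option α → Prop) [DecidablePred p] :
    (univ.filter p).card = (if p none then 1 else 0) + (univ.filter (fun a => p (some a))).card := by
  classical
  have h1 : (univ : Finset (Option α)) = insert none (univ.map Function.Embedding.some) := by
    ext x; cases x <;> simp
  rw [h1, filter_insert, filter_map]
  have h2 : (filter (p ∘ ⇑Function.Embedding.some) univ) = filter (fun a => p (some a)) univ := rfl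
  split
  · rw [card_insert_of_notMem (by simp), card_map, Nat.add_comm, h2]
  · rw [card_map, h2, Nat.zero_add]


/-- If a strongly regular graph has parameters (4t+1, 2t, t−1, t), then adding a
universal vertex and performing a local complementation at any non-universal vertex
yields a (2t+1)-regular graph on 4t+2 vertices. -/
theorem srg_addUniversal_localComp_regular {V : Type*} [Fintype V]
    (G : SimpleGraph V) [DecidableRel G.Adj] (t : ℕ)
    (h : G.IsSRGWith (4 * t + 1) (2 * t) (t - 1) t) (u : V) :
    Fintype.card (Option V) = 4 * t + 2 ∧
      ∀ v : Option V,
        Set.ncard ((localComp (addUniversal G) (some u)).neighborSet v) = 2 * t + 1 := by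
  classical
  have hcard : Fintype.card V = 4 * t + 1 := h.card
  refine ⟨by simp [hcard], ?_⟩
  intro v
  set H := localComp (addUniversal G) (some u) with hH
  have hset : H.neighborSet v = ↑(univ.filter (H.Adj v)) := by
    ext x; simp [SimpleGraph.neighborSet]
  rw [hset, Set.ncard_coe_finset]
  have hdeg : ∀ w : V, (univ.filter (G.Adj w)).card = 2 * t := by
    intro w
    have h1 := h.regular w
    rwa [SimpleGraph.degree, SimpleGraph.neighborFinset_eq_filter] at h1
  have hcn : ∀ w : V, G.Adj u w →
      (univ.filter (fun x => G.Adj u x ∧ G.Adj w x)).card = t - 1 := by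
    intro w hw
    have h1 := h.of_adj u w hw
    rw [← h1]
    rw [Fintype.card_subtype]; congr 1
  rcases v with _ | w
  · -- v = none
    rw [card_filter_option']
    have e1 : ¬ H.Adj none none := by simp [hH, localComp, addUniversal, Xor']
    rw [if_neg e1]
    have e2 : (univ.filter fun a => H.Adj none (some a)) = univ.filter (fun a => ¬ G.Adj u a) := by
      apply filter_congr; intro x _; simp [hH, localComp, addUniversal, Xor']
    rw [e2]
    have e3 := Finset.card_filter_add_card_filter_not (s := (univ : Finset V))
      (p := fun a => G.Adj u a)
    rw [hdeg u, Finset.card_univ, hcard] at e3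
    omega
  · by_cases hw : G.Adj u w
    · -- w adjacent to u
      rw [card_filter_option']
      have e1 : ¬ H.Adj (some w) none := by simp [hH, localComp, addUniversal, Xor', hw]
      rw [if_neg e1]
      set A := univ.filter (G.Adj w) with hA'
      set B := univ.filter (fun x => w ≠ x ∧ G.Adj u x) with hB'
      have e2 : (univ.filter fun a => H.Adj (some w) (some a)) = (A \ B) ∪ (B \ A) := by
        ext x
        simp only [hH, localComp, addUniversal, Xor', hA', hB', Finset.mem_union,
          Finset.mem_sdiff, Finset.mem_filter, Finset.mem_univ, true_and,
          SimpleGraph.mem_neighborSet, ne_eq, Option.some.injEq, Xor]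
        tauto
      rw [e2, card_union_of_disjoint disjoint_sdiff_sdiff]
      have hAB : (A ∩ B).card = t - 1 := by
        rw [← hcn w hw]
        congr 1
        ext x
        simp only [hA', hB', Finset.mem_inter, Finset.mem_filter, Finset.mem_univ, true_and]
        constructor
        · rintro ⟨h1, _, h3⟩; exact ⟨h3, h1⟩
        · rintro ⟨h1, h2⟩; exact ⟨h2, h2.ne, h1⟩
      have hA : A.card = 2 * t := hdeg w
      have hB : B.card + 1 = 2 * t := by
        have hins : insert w B = univ.filter (G.Adj u) := by
          ext x
          simp only [hB', Finset.mem_insert, Finset.mem_filter, Finset.mem_univ, true_and]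
          constructor
          · rintro (rfl | ⟨_, h2⟩); exact hw; exact h2
          · intro hx
            rcases eq_or_ne w x with rfl | hne
            · exact Or.inl rfl
            · exact Or.inr ⟨hne, hx⟩
        calc B.card + 1 = (insert w B).card :=
              (card_insert_of_notMem (by simp [hB'])).symm
          _ = 2 * t := by rw [hins]; exact hdeg u
      have h1 : (A \ B).card + (A ∩ B).card = A.card := Finset.card_sdiff_add_card_inter A B
      have h2 : (B \ A).card + (B ∩ A).card = B.card := Finset.card_sdiff_add_card_inter B A
      rw [Finset.inter_comm] at h2
      omega
    · -- w not adjacent to u (includes w = u)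
      rw [card_filter_option']
      have e1 : H.Adj (some w) none := by simp [hH, localComp, addUniversal, Xor', hw]
      rw [if_pos e1]
      have e2 : (univ.filter fun a => H.Adj (some w) (some a)) = univ.filter (G.Adj w) := by
        apply filter_congr; intro x _
        simp only [hH, localComp, addUniversal, Xor', ne_eq, Option.some.injEq]
        constructor
        · rintro (⟨h1, _⟩ | ⟨⟨_, h2, _⟩, _⟩)
          · exact h1
          · exact absurd h2 hw
        · intro h1
          exact Or.inl ⟨h1, fun ⟨_, h2, _⟩ => hw h2⟩
      rw [e2, hdeg w]
      omega
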